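/- Let w : {1,...,K} → [0,∞), ŵ : {1,...,K} → [0,∞), and let π̂, π ∈ Δ_K be probability vectors supported on {k : w(k) ≠ 0}, with all relevant denominators positive. With T_u(v)_y = u(y)·v_y / Σ_k u(k)·v_k and κ = sup_k w(k) / inf_{k:w(k)≠0} w(k), it holds that Σ_y |T_{ŵ}(π̂)_y − T_w(π)_y| ≤ 2κ·Σ_y|π̂_y − π_y| + 2·max_y|ŵ(y)−w(y)| / inf_{l:w(l)≠0} w(l). -/

import Mathlib

/-! Passing through the intermediate distribution `T_w(π̂)` (`reweight w πh`), the error splits into a weight term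
`T_ŵ(π̂) - T_w(π̂)` and a source term `T_w(π̂) - T_w(π)`. Each is a difference of two normalized
nonnegative vectors, whose `ℓ1` distance is at most twice the `ℓ1` distance of the unnormalized
vectors divided by a normalizing constant; the normalizing constants `∑ w π` are at least the
smallest nonzero weight because `π` is a probability vector supported where `w ≠ 0`. -/

open Finset

variable {ι : Type*} [Fintype ι]

noncomputable def reweight (u p : ι → ℝ) (y : ι) : ℝ :=
  u y * p y / ∑ j, u j * p j

theorem sum_abs_div_sum_sub_div_sum_le (a b : ι → ℝ) (ha : ∀ i, 0 ≤ a i)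
    (hA : 0 < ∑ i, a i) (hB : 0 < ∑ i, b i) :
    ∑ i, |a i / ∑ j, a j - b i / ∑ j, b j| ≤ 2 * (∑ i, |a i - b i|) / ∑ j, b j := by
  set A := ∑ j, a j
  set B := ∑ j, b j
  set S := ∑ i, |a i - b i|
  have hBA : |B - A| ≤ S := by
    rw [abs_sub_comm, ← sum_sub_distrib]
    exact abs_sum_le_sum_abs _ _
  have pointwise (i : ι) : |a i / A - b i / B| ≤ |a i - b i| / B + a i * (|B - A| / (A * B)) := by
    have split : a i / A - b i / B = (a i - b i) / B + a i * ((B - A) / (A * B)) := by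
      field_simp
      ring
    rw [split]
    refine (abs_add_le _ _).trans_eq ?_
    rw [abs_div, abs_of_pos hB, abs_mul, abs_of_nonneg (ha i), abs_div, abs_of_pos (mul_pos hA hB)]
  calc ∑ i, |a i / A - b i / B|
      ≤ ∑ i, (|a i - b i| / B + a i * (|B - A| / (A * B))) := sum_le_sum fun i _ => pointwise i
    _ = S / B + A * (|B - A| / (A * B)) := by rw [sum_add_distrib, ← sum_div, ← sum_mul]
    _ = S / B + |B - A| / B := by field_simp
    _ ≤ S / B + S / B := by gcongr
    _ = 2 * S / B := by ring

theorem sum_abs_reweight_sub_reweight_le {u v p q : ι → ℝ} {c E : ℝ}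
    (hup : ∀ i, 0 ≤ u i * p i) (hu : 0 < ∑ j, u j * p j) (hc : 0 < c)
    (hcv : c ≤ ∑ j, v j * q j) (hE : ∑ y, |u y * p y - v y * q y| ≤ E) :
    ∑ y, |reweight u p y - reweight v q y| ≤ 2 * E / c := by
  have hE0 : 0 ≤ E := (sum_nonneg fun y _ => abs_nonneg _).trans hE
  calc ∑ y, |reweight u p y - reweight v q y|
      ≤ 2 * (∑ y, |u y * p y - v y * q y|) / ∑ j, v j * q j :=
        sum_abs_div_sum_sub_div_sum_le (fun i => u i * p i) (fun i => v i * q i) hup hu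
          (hc.trans_le hcv)
    _ ≤ 2 * E / c := by gcongr

theorem sum_mul_le_iSup_mul_sum (f g : ι → ℝ) (hg : ∀ i, 0 ≤ g i) :
    ∑ i, f i * g i ≤ (⨆ i, f i) * ∑ i, g i := by
  rw [mul_sum]
  exact sum_le_sum fun i _ =>
    mul_le_mul_of_nonneg_right (le_ciSup (Set.finite_range f).bddAbove i) (hg i)

theorem sum_abs_mul_sub_mul_right_le (f g p : ι → ℝ) (hp : ∀ i, 0 ≤ p i) :
    ∑ i, |f i * p i - g i * p i| ≤ (⨆ i, |f i - g i|) * ∑ i, p i := by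
  simp_rw [← sub_mul, abs_mul, abs_of_nonneg (hp _)]
  exact sum_mul_le_iSup_mul_sum _ p hp

theorem sum_abs_mul_sub_mul_left_le (w p q : ι → ℝ) (hw : ∀ i, 0 ≤ w i) :
    ∑ i, |w i * p i - w i * q i| ≤ (⨆ i, w i) * ∑ i, |p i - q i| := by
  simp_rw [← mul_sub, abs_mul, abs_of_nonneg (hw _)]
  exact sum_mul_le_iSup_mul_sum w _ fun i => abs_nonneg _

theorem le_sum_mul_of_le {c : ℝ} (w p : ι → ℝ) (hp0 : ∀ i, 0 ≤ p i) (hp1 : ∑ i, p i = 1)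
    (hc : ∀ i, p i ≠ 0 → c ≤ w i) : c ≤ ∑ i, w i * p i := by
  calc c = ∑ i, c * p i := by rw [← mul_sum, hp1, mul_one]
    _ ≤ ∑ i, w i * p i := sum_le_sum fun i _ => by
        by_cases hpi : p i = 0
        · simp [hpi]
        · exact mul_le_mul_of_nonneg_right (hc i hpi) (hp0 i)

theorem finite_ne_zero_values (w : ι → ℝ) : {x | ∃ j, w j = x ∧ x ≠ 0}.Finite :=
  (Set.finite_range w).subset <| by
    rintro _ ⟨j, hj, -⟩
    exact ⟨j, hj⟩

theorem sInf_ne_zero_values_le (w : ι → ℝ) {i : ι} (hi : w i ≠ 0) :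
    sInf {x | ∃ j, w j = x ∧ x ≠ 0} ≤ w i :=
  csInf_le (finite_ne_zero_values w).bddBelow ⟨i, rfl, hi⟩

theorem sInf_ne_zero_values_pos (w : ι → ℝ) (hw0 : ∀ i, 0 ≤ w i) (hwne : ∃ i, w i ≠ 0) :
    0 < sInf {x | ∃ j, w j = x ∧ x ≠ 0} := by
  obtain ⟨i, hi⟩ := hwne
  have hmem : sInf {x | ∃ j, w j = x ∧ x ≠ 0} ∈ {x | ∃ j, w j = x ∧ x ≠ 0} :=
    Set.Nonempty.csInf_mem ⟨w i, i, rfl, hi⟩ (finite_ne_zero_values w)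
  obtain ⟨j, hj, hne⟩ := hmem
  rw [← hj] at hne ⊢
  exact (hw0 j).lt_of_ne' hne

theorem label_shift_miscalibration_bound_general
    (K : ℕ) (w wh : Fin K → ℝ) (hw0 : ∀ j, 0 ≤ w j) (hwh0 : ∀ j, 0 ≤ wh j)
    (hwne : ∃ j, w j ≠ 0)
    (κ : ℝ) (hκ : κ = (⨆ j, w j) / sInf {x | ∃ j, w j = x ∧ x ≠ 0})
    (πh π : Fin K → ℝ)
    (hπh0 : ∀ y, 0 ≤ πh y) (hπh1 : ∑ y, πh y = 1)
    (hπ0 : ∀ y, 0 ≤ π y) (hπ1 : ∑ y, π y = 1)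
    (hsuppπh : ∀ y, w y = 0 → πh y = 0)
    (hsuppπ : ∀ y, w y = 0 → π y = 0)
    (hden1 : 0 < ∑ j, w j * πh j)
    (hden3 : 0 < ∑ j, wh j * πh j) :
    ∑ y, |wh y * πh y / (∑ j, wh j * πh j) - w y * π y / (∑ j, w j * π j)| ≤
      2 * κ * (∑ y, |πh y - π y|) +
        2 * (⨆ y, |wh y - w y|) / sInf {x | ∃ l, w l = x ∧ x ≠ 0} := by
  set m := sInf {x | ∃ l, w l = x ∧ x ≠ 0}
  have hm : 0 < m := sInf_ne_zero_values_pos w hw0 hwne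
  have le_normalizer (p : Fin K → ℝ) (hp0 : ∀ y, 0 ≤ p y) (hp1 : ∑ y, p y = 1)
      (hsupp : ∀ y, w y = 0 → p y = 0) : m ≤ ∑ j, w j * p j :=
    le_sum_mul_of_le w p hp0 hp1 fun i hpi => sInf_ne_zero_values_le w (mt (hsupp i) hpi)
  have weight_err : ∑ y, |wh y * πh y - w y * πh y| ≤ ⨆ y, |wh y - w y| := by
    simpa only [hπh1, mul_one] using sum_abs_mul_sub_mul_right_le wh w πh hπh0
  change ∑ y, |reweight wh πh y - reweight w π y| ≤ _
  calc ∑ y, |reweight wh πh y - reweight w π y|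
      ≤ ∑ y, |reweight wh πh y - reweight w πh y| + ∑ y, |reweight w πh y - reweight w π y| := by
        rw [← sum_add_distrib]
        exact sum_le_sum fun y _ => abs_sub_le _ _ _
    _ ≤ 2 * (⨆ y, |wh y - w y|) / m + 2 * ((⨆ j, w j) * ∑ y, |πh y - π y|) / m :=
        add_le_add
          (sum_abs_reweight_sub_reweight_le (fun i => mul_nonneg (hwh0 i) (hπh0 i)) hden3 hm
            (le_normalizer πh hπh0 hπh1 hsuppπh) weight_err)
          (sum_abs_reweight_sub_reweight_le (fun i => mul_nonneg (hw0 i) (hπh0 i)) hden1 hm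
            (le_normalizer π hπ0 hπ1 hsuppπ) (sum_abs_mul_sub_mul_left_le w πh π hw0))
    _ = 2 * κ * (∑ y, |πh y - π y|) + 2 * (⨆ y, |wh y - w y|) / m := by
        rw [hκ]
        ring

/-- Theorem 3: miscalibration of reweighted empirical frequencies
decomposes into a source-calibration term and a weight-estimation term. -/
theorem label_shift_miscalibration_bound
    (K : ℕ) [NeZero K] (w wh : Fin K → ℝ) (hw0 : ∀ j, 0 ≤ w j) (hwh0 : ∀ j, 0 ≤ wh j)
    (hwne : ∃ j, w j ≠ 0)
    (κ : ℝ) (hκ : κ = (⨆ j, w j) / sInf {x | ∃ j, w j = x ∧ x ≠ 0})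
    (πh π : Fin K → ℝ)
    (hπh0 : ∀ y, 0 ≤ πh y) (hπh1 : ∑ y, πh y = 1)
    (hπ0 : ∀ y, 0 ≤ π y) (hπ1 : ∑ y, π y = 1)
    (hsuppπh : ∀ y, w y = 0 → πh y = 0)
    (hsuppπ : ∀ y, w y = 0 → π y = 0)
    (hden1 : 0 < ∑ j, w j * πh j) (hden2 : 0 < ∑ j, w j * π j)
    (hden3 : 0 < ∑ j, wh j * πh j) :
    ∑ y, |wh y * πh y / (∑ j, wh j * πh j) - w y * π y / (∑ j, w j * π j)| ≤
      2 * κ * (∑ y, |πh y - π y|) +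
        2 * (⨆ y, |wh y - w y|) / sInf {x | ∃ l, w l = x ∧ x ≠ 0} :=
  label_shift_miscalibration_bound_general K w wh hw0 hwh0 hwne κ hκ πh π hπh0 hπh1 hπ0 hπ1 hsuppπh
    hsuppπ hden1 hden3
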